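/- For a real-valued random variable Y with E[Y]=0, E[Y²]=σ², and Y ≤ s' ≤ s almost surely where s > 0 and s ≥ σ (so that σ²/s² ≤ 1), for any λ ≥ 0, E[e^{λY}] ≤ (σ²/s²)e^{λs} + 1 − σ²/s² − λσ²/s. -/

import Mathlib

open MeasureTheory Real
open scoped Nat

/-!
Write `exp t = 1 + t + t ^ 2 * expTail t`, where `expTail t = ∑ tⁿ / (n + 2)!` is
`(exp t - 1 - t) / t ^ 2` away from `0`. The function `expTail` is nondecreasing: termwise on
`t ≥ 0`, and for `t ≤ 0` because there `exp t ≤ 1 + t + t ^ 2 / 2`, i.e. `expTail t ≤ 1 / 2 = expTail 0`.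
Hence `Y ≤ s` gives `exp (λY) ≤ 1 + λY + λ²Y² expTail (λs)` pointwise; taking expectations, the
linear term vanishes and `λ²σ² expTail (λs) = σ²/s² (exp (λs) - 1 - λs)`.
-/

noncomputable def expTail (t : ℝ) : ℝ := ∑' n : ℕ, t ^ n / (n + 2)!

lemma summable_pow_div_factorial_add_two (t : ℝ) :
    Summable (fun n : ℕ => t ^ n / (n + 2)!) := by
  refine (summable_pow_div_factorial |t|).of_norm_bounded fun n => ?_
  rw [norm_div, norm_pow, Real.norm_eq_abs, Real.norm_natCast]
  gcongr
  omega

lemma exp_eq_one_add_add_sq_mul_expTail (t : ℝ) : exp t = 1 + t + t ^ 2 * expTail t := by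
  have hsum := summable_pow_div_factorial t
  have hsum1 : Summable (fun n : ℕ => t ^ (n + 1) / (n + 1)!) := (summable_nat_add_iff 1).mpr hsum
  have hshift : ∀ n : ℕ, t ^ (n + 1 + 1) / (n + 1 + 1)! = t ^ 2 * (t ^ n / (n + 2)!) := fun n => by
    ring
  have hexp : exp t = ∑' n : ℕ, t ^ n / n ! := by rw [exp_eq_exp_ℝ, NormedSpace.exp_eq_tsum_div]
  rw [hexp, hsum.tsum_eq_zero_add, hsum1.tsum_eq_zero_add, tsum_congr hshift, tsum_mul_left, expTail]
  norm_num
  ring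

lemma expTail_zero : expTail 0 = 1 / 2 := by
  rw [expTail, tsum_eq_single 0 fun n hn => by simp [hn]]
  norm_num

lemma monotoneOn_expTail : MonotoneOn expTail (Set.Ici 0) := fun t ht T _ htT =>
  (summable_pow_div_factorial_add_two t).tsum_le_tsum (fun n => by have : (0 : ℝ) ≤ t := ht; gcongr)
    (summable_pow_div_factorial_add_two T)

lemma exp_le_one_add_add_sq_div_two_of_nonpos {t : ℝ} (ht : t ≤ 0) :
    exp t ≤ 1 + t + t ^ 2 / 2 := by
  have hderiv (x : ℝ) : HasDerivAt (fun x => exp x - 1 - x - x ^ 2 / 2) (exp x - 1 - x) x := by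
    refine ((((hasDerivAt_exp x).sub_const 1).sub (hasDerivAt_id x)).sub
      ((hasDerivAt_pow 2 x).div_const 2)).congr_deriv ?_
    push_cast
    ring
  have hmono : Monotone (fun x => exp x - 1 - x - x ^ 2 / 2) :=
    monotone_of_deriv_nonneg (fun x => (hderiv x).differentiableAt) fun x => by
      rw [(hderiv x).deriv]
      linarith [add_one_le_exp x]
  have := hmono ht
  simp only [exp_zero] at this
  linarith

lemma expTail_le_half_of_nonpos {t : ℝ} (ht : t ≤ 0) : expTail t ≤ 1 / 2 := by
  rcases ht.lt_or_eq with ht | rfl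
  · have hsq : 0 < t ^ 2 := by nlinarith
    have := exp_eq_one_add_add_sq_mul_expTail t
    have := exp_le_one_add_add_sq_div_two_of_nonpos ht.le
    nlinarith
  · exact expTail_zero.le

lemma expTail_le_expTail_of_le {t T : ℝ} (hT : 0 ≤ T) (htT : t ≤ T) : expTail t ≤ expTail T := by
  rcases le_total 0 t with ht | ht
  · exact monotoneOn_expTail ht (ht.trans htT) htT
  · calc expTail t ≤ 1 / 2 := expTail_le_half_of_nonpos ht
      _ = expTail 0 := expTail_zero.symm
      _ ≤ expTail T := monotoneOn_expTail Set.self_mem_Ici hT hT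

lemma exp_le_one_add_add_sq_mul_expTail {t T : ℝ} (hT : 0 ≤ T) (htT : t ≤ T) :
    exp t ≤ 1 + t + t ^ 2 * expTail T := by
  rw [exp_eq_one_add_add_sq_mul_expTail t]
  gcongr
  exact expTail_le_expTail_of_le hT htT

lemma integral_exp_mul_le {Ω : Type*} [MeasurableSpace Ω] {μ : Measure Ω} [IsProbabilityMeasure μ]
    {Y : Ω → ℝ} {b lam : ℝ} (hb : 0 ≤ b) (hlam : 0 ≤ lam) (hint : Integrable Y μ)
    (hint2 : Integrable (fun ω => Y ω ^ 2) μ) (hintexp : Integrable (fun ω => exp (lam * Y ω)) μ)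
    (hbdd : ∀ᵐ ω ∂μ, Y ω ≤ b) :
    ∫ ω, exp (lam * Y ω) ∂μ ≤
      1 + lam * ∫ ω, Y ω ∂μ + lam ^ 2 * expTail (lam * b) * ∫ ω, Y ω ^ 2 ∂μ := by
  have hpointwise : ∀ᵐ ω ∂μ,
      exp (lam * Y ω) ≤ 1 + lam * Y ω + lam ^ 2 * expTail (lam * b) * Y ω ^ 2 := by
    filter_upwards [hbdd] with ω hω
    have := exp_le_one_add_add_sq_mul_expTail (mul_nonneg hlam hb)
      (mul_le_mul_of_nonneg_left hω hlam)
    linarith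
  have hlin : Integrable (fun ω => 1 + lam * Y ω) μ := (integrable_const 1).add (hint.const_mul lam)
  have hquad : Integrable (fun ω => 1 + lam * Y ω + lam ^ 2 * expTail (lam * b) * Y ω ^ 2) μ :=
    hlin.add (hint2.const_mul _)
  refine (integral_mono_ae hintexp hquad hpointwise).trans_eq ?_
  rw [integral_add hlin (hint2.const_mul _), integral_add (integrable_const 1) (hint.const_mul lam),
    integral_const_mul, integral_const_mul]
  simp

theorem bennett_mgf_bound_general {Ω : Type*} [MeasurableSpace Ω] (μ : Measure Ω)
    [IsProbabilityMeasure μ] (Y : Ω → ℝ) (σ s s' lam : ℝ)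
    (hs : 0 < s) (hs' : s' ≤ s) (hlam : 0 ≤ lam)
    (hint : Integrable Y μ) (hmean : ∫ ω, Y ω ∂μ = 0)
    (hint2 : Integrable (fun ω => (Y ω) ^ 2) μ)
    (hvar : ∫ ω, (Y ω) ^ 2 ∂μ = σ ^ 2)
    (hbdd : ∀ᵐ ω ∂μ, Y ω ≤ s')
    (hintexp : Integrable (fun ω => Real.exp (lam * Y ω)) μ) :
    ∫ ω, Real.exp (lam * Y ω) ∂μ ≤
      σ ^ 2 / s ^ 2 * Real.exp (lam * s) + 1 - σ ^ 2 / s ^ 2 - lam * σ ^ 2 / s := by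
  have hbdd_s : ∀ᵐ ω ∂μ, Y ω ≤ s := hbdd.mono fun ω hω => hω.trans hs'
  have hbound := integral_exp_mul_le hs.le hlam hint hint2 hintexp hbdd_s
  have htail := exp_eq_one_add_add_sq_mul_expTail (lam * s)
  rw [hmean, hvar] at hbound
  refine hbound.trans_eq ?_
  field_simp
  rw [htail]
  ring

theorem bennett_mgf_bound {Ω : Type*} [MeasurableSpace Ω] (μ : Measure Ω)
    [IsProbabilityMeasure μ] (Y : Ω → ℝ) (σ s s' lam : ℝ)
    (hs : 0 < s) (hs' : s' ≤ s) (hσs : σ ≤ s) (hlam : 0 ≤ lam)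
    (hmeas : Measurable Y)
    (hint : Integrable Y μ) (hmean : ∫ ω, Y ω ∂μ = 0)
    (hint2 : Integrable (fun ω => (Y ω) ^ 2) μ)
    (hvar : ∫ ω, (Y ω) ^ 2 ∂μ = σ ^ 2)
    (hbdd : ∀ᵐ ω ∂μ, Y ω ≤ s')
    (hintexp : Integrable (fun ω => Real.exp (lam * Y ω)) μ) :
    ∫ ω, Real.exp (lam * Y ω) ∂μ ≤
      σ ^ 2 / s ^ 2 * Real.exp (lam * s) + 1 - σ ^ 2 / s ^ 2 - lam * σ ^ 2 / s :=
  bennett_mgf_bound_general μ Y σ s s' lam hs hs' hlam hint hmean hint2 hvar hbdd hintexp
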